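/- arXiv:1705.10396 — 2 statements merged into one kernel-verified Lean document; each statement's English description precedes it below -/
import Mathlib

section
/- Let d_1 ≥ d_2 ≥ ... ≥ d_n ≥ 0 be reals and x_1,...,x_n ∈ [0,1] with Σ_{i=1}^n x_i ≥ n − k for some integer k ≤ n, and suppose Σ_{i=1}^n d_i x_i ≤ b. Then Σ_{i=k+1}^n d_i ≤ b. -/
/-!
Let `S = {k, …, n-1}` and `t = d k`. Every `d i` with `i ∈ S` is at most `t` and every other
`d i` is at least `t`. The deficit `∑_{i ∈ S} d i (1 - x i)` is therefore at most
`t · ∑_{i ∈ S} (1 - x i)`, and since `∑ x i ≥ |S|` the fractional mass missing on `S` is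
carried by the complement: `∑_{i ∈ S} (1 - x i) ≤ ∑_{i ∉ S} x i`. On the complement that mass is
weighted by demands at least `t`, so it pays for the deficit.
-/

open Finset

theorem sum_le_sum_mul_of_le_threshold {ι R : Type*} [Fintype ι] [DecidableEq ι]
    [CommRing R] [LinearOrder R] [IsStrictOrderedRing R]
    (s : Finset ι) (d x : ι → R) (t : R) (ht : 0 ≤ t)
    (hd_in : ∀ i ∈ s, d i ≤ t) (hd_out : ∀ i ∉ s, t ≤ d i)
    (hx_in : ∀ i ∈ s, x i ≤ 1) (hx_out : ∀ i ∉ s, 0 ≤ x i)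
    (hcard : (#s : R) ≤ ∑ i, x i) :
    ∑ i ∈ s, d i ≤ ∑ i, d i * x i := by
  have deficit : ∑ i ∈ s, d i * (1 - x i) ≤ t * ∑ i ∈ s, (1 - x i) := by
    rw [mul_sum]
    exact sum_le_sum fun i hi =>
      mul_le_mul_of_nonneg_right (hd_in i hi) (sub_nonneg.mpr (hx_in i hi))
  have missing_mass : ∑ i ∈ s, (1 - x i) ≤ ∑ i ∈ sᶜ, x i := by
    rw [← sum_compl_add_sum s x] at hcard
    rw [sum_sub_distrib, sum_const, nsmul_one]
    linarith
  have surplus : t * ∑ i ∈ sᶜ, x i ≤ ∑ i ∈ sᶜ, d i * x i := by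
    rw [mul_sum]
    exact sum_le_sum fun i hi =>
      mul_le_mul_of_nonneg_right (hd_out i (mem_compl.mp hi)) (hx_out i (mem_compl.mp hi))
  have split : ∑ i ∈ s, d i = ∑ i ∈ s, d i * (1 - x i) + ∑ i ∈ s, d i * x i := by
    rw [← sum_add_distrib]
    exact sum_congr rfl fun i _ => by ring
  rw [split, ← sum_compl_add_sum s (fun i => d i * x i)]
  have := mul_le_mul_of_nonneg_left missing_mass ht
  linarith

theorem stmt5_general {n : ℕ} (k : ℕ)
    (d : Fin n → ℝ) (hmono : ∀ i j : Fin n, i ≤ j → d j ≤ d i)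
    (hd0 : ∀ i, 0 ≤ d i)
    (x : Fin n → ℝ) (hx0 : ∀ i, 0 ≤ x i) (hx1 : ∀ i, x i ≤ 1)
    (hxsum : (n : ℝ) - k ≤ ∑ i, x i)
    (b : ℝ) (hload : ∑ i, d i * x i ≤ b) :
    ∑ i ∈ Finset.univ.filter (fun i : Fin n => k ≤ (i : ℕ)), d i ≤ b := by
  rcases lt_or_ge k n with hkn | hnk
  · set κ : Fin n := ⟨k, hkn⟩
    have tail_eq : univ.filter (fun i : Fin n => k ≤ (i : ℕ)) = Ici κ := by
      ext i
      simp [κ, Fin.le_def]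
    have tail_card : (#(Ici κ) : ℝ) = n - k := by
      rw [Fin.card_Ici, Nat.cast_sub hkn.le]
    rw [tail_eq]
    refine (sum_le_sum_mul_of_le_threshold _ d x (d κ) (hd0 κ)
      (fun i hi => hmono κ i (mem_Ici.mp hi)) (fun i hi => hmono i κ ?_)
      (fun i _ => hx1 i) (fun i _ => hx0 i) (tail_card ▸ hxsum)).trans hload
    exact (not_le.mp (mt mem_Ici.mpr hi)).le
  · have tail_empty : univ.filter (fun i : Fin n => k ≤ (i : ℕ)) = ∅ :=
      filter_false_of_mem fun i _ => not_le.mpr (i.isLt.trans_le hnk)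
    rw [tail_empty, sum_empty]
    exact (sum_nonneg fun i _ => mul_nonneg (hd0 i) (hx0 i)).trans hload

/-- If `d 0 ≥ d 1 ≥ ... ≥ d (n-1) ≥ 0`, `x i ∈ [0,1]` with `∑ x i ≥ n - k`,
and `∑ d i * x i ≤ b`, then the total demand of all but the `k`
largest-demand items is at most `b`:  `∑_{i ≥ k} d i ≤ b`. -/
theorem stmt5 {n : ℕ} (k : ℕ) (hk : k ≤ n)
    (d : Fin n → ℝ) (hmono : ∀ i j : Fin n, i ≤ j → d j ≤ d i)
    (hd0 : ∀ i, 0 ≤ d i)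
    (x : Fin n → ℝ) (hx0 : ∀ i, 0 ≤ x i) (hx1 : ∀ i, x i ≤ 1)
    (hxsum : (n : ℝ) - k ≤ ∑ i, x i)
    (b : ℝ) (hload : ∑ i, d i * x i ≤ b) :
    ∑ i ∈ Finset.univ.filter (fun i : Fin n => k ≤ (i : ℕ)), d i ≤ b :=
  stmt5_general k d hmono hd0 x hx0 hx1 hxsum b hload
end

section
/- In the planar-SAT reduction graph: for a boolean formula Φ = (X, C), construct the demand matching instance with vertices {u_c : c ∈ C} ∪ {t_x, f_x, v_x : x ∈ X}; edges v_x t_x and v_x f_x of demand and profit D for each x; unit demand/profit edge u_c t_x for each clause c containing literal ¬x; unit demand/profit edge u_c f_x for each clause c containing literal x; capacity 1 on each u_c and capacity D on each t_x, f_x, v_x. Then Φ is satisfiable if and only if the maximum profit of a feasible demand matching equals D·|X| + |C|. -/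
/-!
Charge the profit of each edge to its endpoint `u_c` or `v_x`: the edge `v_x ℓ` has profit equal
to its demand `D` at `v_x`, a clause edge `u_c ℓ` has profit equal to its demand `1` at `u_c`.
Hence a feasible `F` has profit at most the total capacity `D·|X| + |C|` of these vertices, with
equality iff all of them are saturated. A saturated `v_x` carries an edge `v_x ℓ`, which fills `ℓ`;
so, setting `x` true iff `v_x t_x ∈ F`, the clause edge at a saturated `u_c` goes to the vertex
of a true literal (`f_x` for `x`, `t_x` for `¬x`), and the assignment satisfies every clause.
Conversely, a satisfying assignment gives such an `F`: one edge at each `v_x` as above and one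
edge from each `u_c` to a true literal. A literal vertex then carries either the demand `D` of
`v_x ℓ` or only unit edges, at most `D` of them by the bound on occurrences.
-/

/-- Vertices of the reduction instance: a vertex `u_c` for each clause `c`,
and vertices `t_x` (= `(x,0)`), `f_x` (= `(x,1)`), `v_x` (= `(x,2)`) for each
variable `x`. -/
abbrev RedVtx (X C : Type*) := C ⊕ (X × Fin 3)

/-- Edges of the reduction instance: an edge `v_x t_x` (= `inl (x, true)`)
and `v_x f_x` (= `inl (x, false)`) for every variable `x`; a unit edge
`u_c f_x` for every clause `c` containing the literal `x` positively; and a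
unit edge `u_c t_x` for every clause `c` containing the literal `¬x`. -/
def RedEdge (X C : Type*) (pos neg : C → Finset X) :=
  (X × Bool) ⊕ ({q : C × X // q.2 ∈ pos q.1} ⊕ {q : C × X // q.2 ∈ neg q.1})

/-- Demand placed by an edge on a vertex (0 on non-endpoints).  The edges
`v_x t_x`, `v_x f_x` have demand `D` at both endpoints; clause edges have
unit demands. -/
def redDem {X C : Type*} [DecidableEq X] [DecidableEq C]
    (pos neg : C → Finset X) (D : ℕ) :
    RedEdge X C pos neg → RedVtx X C → ℕ
  | Sum.inl (x, b), w =>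
      if w = Sum.inr (x, 2) ∨ w = Sum.inr (x, if b then 0 else 1) then D else 0
  | Sum.inr (Sum.inl q), w =>
      if w = Sum.inl q.1.1 ∨ w = Sum.inr (q.1.2, 1) then 1 else 0
  | Sum.inr (Sum.inr q), w =>
      if w = Sum.inl q.1.1 ∨ w = Sum.inr (q.1.2, 0) then 1 else 0

/-- Capacities: 1 on each clause vertex `u_c`, `D` on each of `t_x, f_x, v_x`. -/
def redCap {X C : Type*} (D : ℕ) : RedVtx X C → ℕ
  | Sum.inl _ => 1
  | Sum.inr _ => D

/-- Profits: `D` for the edges `v_x t_x`, `v_x f_x`, 1 for clause edges. -/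
def redProfit {X C : Type*} (pos neg : C → Finset X) (D : ℕ) :
    RedEdge X C pos neg → ℕ
  | Sum.inl _ => D
  | Sum.inr _ => 1

/-- A demand matching: at each vertex the total demand of chosen edges is at
most the capacity. -/
def redFeasible {X C : Type*} [DecidableEq X] [DecidableEq C]
    (pos neg : C → Finset X) (D : ℕ) (F : Finset (RedEdge X C pos neg)) : Prop :=
  ∀ w : RedVtx X C, ∑ e ∈ F, redDem pos neg D e w ≤ redCap D w


/-- Clause edges `u_c f_x` (from `x ∈ pos c`) and `u_c t_x` (from `x ∈ neg c`). -/
abbrev ClauseEdge {X C : Type*} (pos neg : C → Finset X) :=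
  {q : C × X // q.2 ∈ pos q.1} ⊕ {q : C × X // q.2 ∈ neg q.1}

namespace ClauseEdge

variable {X C : Type*} {pos neg : C → Finset X}

def clause : ClauseEdge pos neg → C := Sum.elim (fun q => q.1.1) (fun q => q.1.1)

def var : ClauseEdge pos neg → X := Sum.elim (fun q => q.1.2) (fun q => q.1.2)

/-- The value of `var` making the literal of the edge true. -/
def sign : ClauseEdge pos neg → Bool := Sum.elim (fun _ => true) (fun _ => false)

lemma exists_clause_eq_iff (σ : X → Bool) (c : C) :
    (∃ e : ClauseEdge pos neg, e.clause = c ∧ σ e.var = e.sign) ↔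
      (∃ x ∈ pos c, σ x = true) ∨ (∃ x ∈ neg c, σ x = false) := by
  constructor
  · rintro ⟨⟨⟨c, x⟩, hx⟩ | ⟨⟨c, x⟩, hx⟩, rfl, hσ⟩
    exacts [Or.inl ⟨x, hx, hσ⟩, Or.inr ⟨x, hx, hσ⟩]
  · rintro (⟨x, hx, hσ⟩ | ⟨x, hx, hσ⟩)
    exacts [⟨Sum.inl ⟨(c, x), hx⟩, rfl, hσ⟩, ⟨Sum.inr ⟨(c, x), hx⟩, rfl, hσ⟩]

lemma var_mem (e : ClauseEdge pos neg) : e.var ∈ pos e.clause ∨ e.var ∈ neg e.clause := by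
  rcases e with ⟨_, hx⟩ | ⟨_, hx⟩
  exacts [Or.inl hx, Or.inr hx]

end ClauseEdge

section

variable {X C : Type*}

/-- The vertex `t_x` for `b = true`, `f_x` for `b = false`. -/
def litVtx (x : X) (b : Bool) : RedVtx X C := Sum.inr (x, if b then 0 else 1)

@[simp] lemma litVtx_inj {x y : X} {b b' : Bool} :
    (litVtx x b : RedVtx X C) = litVtx y b' ↔ x = y ∧ b = b' := by
  cases b <;> cases b' <;> simp [litVtx]

@[simp] lemma inr_two_ne_litVtx (x y : X) (b : Bool) :
    (Sum.inr (x, 2) : RedVtx X C) ≠ litVtx y b := by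
  cases b <;> simp [litVtx]

@[simp] lemma inl_ne_litVtx (c : C) (y : X) (b : Bool) : (Sum.inl c : RedVtx X C) ≠ litVtx y b :=
  Sum.inl_ne_inr

@[simp] lemma litVtx_ne_inl (c : C) (y : X) (b : Bool) : litVtx y b ≠ (Sum.inl c : RedVtx X C) :=
  Sum.inr_ne_inl

variable {pos neg : C → Finset X}

def assignmentEdges (σ : X → Bool) (w : C → ClauseEdge pos neg) :
    X ⊕ C → RedEdge X C pos neg :=
  Sum.elim (fun x => Sum.inl (x, σ x)) (fun c => Sum.inr (w c))

lemma assignmentEdges_injective {σ : X → Bool} {w : C → ClauseEdge pos neg}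
    (hw : ∀ c, (w c).clause = c) :
    Function.Injective (assignmentEdges σ w) :=
  Function.Injective.sumElim (fun x y h => congrArg Prod.fst (Sum.inl.inj h))
    (fun c d h => by rw [← hw c, ← hw d, Sum.inr_injective h]) fun _ _ => Sum.inl_ne_inr

end

section Reduction

variable {X C : Type*} [DecidableEq X] [DecidableEq C] {pos neg : C → Finset X} {D : ℕ}

open Finset ClauseEdge

instance : DecidableEq (RedEdge X C pos neg) :=
  inferInstanceAs (DecidableEq ((X × Bool) ⊕ ClauseEdge pos neg))

def redLoad (pos neg : C → Finset X) (D : ℕ) (F : Finset (RedEdge X C pos neg))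
    (w : RedVtx X C) : ℕ :=
  ∑ e ∈ F, redDem pos neg D e w

@[simp] lemma redDem_inl (x : X) (b : Bool) (w : RedVtx X C) :
    redDem pos neg D (Sum.inl (x, b)) w =
      if w = Sum.inr (x, 2) ∨ w = litVtx x b then D else 0 :=
  rfl

@[simp] lemma redDem_inr (e : ClauseEdge pos neg) (w : RedVtx X C) :
    redDem pos neg D (Sum.inr e) w =
      if w = Sum.inl e.clause ∨ w = litVtx e.var (!e.sign) then 1 else 0 := by
  rcases e with q | q <;> rfl

lemma redDem_inl_inr_of_ne {x y : X} (hxy : x ≠ y) (b : Bool) (i : Fin 3) :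
    redDem pos neg D (Sum.inl (x, b)) (Sum.inr (y, i)) = 0 := by
  cases b <;> simp [litVtx, Ne.symm hxy]

lemma redDem_inr_inr_le (e : ClauseEdge pos neg) (x : X) (i : Fin 3) :
    redDem pos neg D (Sum.inr e) (Sum.inr (x, i)) ≤
      if x ∈ pos e.clause ∨ x ∈ neg e.clause then 1 else 0 := by
  rw [redDem_inr]
  by_cases hx : x ∈ pos e.clause ∨ x ∈ neg e.clause
  · rw [if_pos hx]
    split_ifs <;> lia
  · rw [if_neg hx, if_neg]
    rintro (h | h)
    · cases h
    · obtain rfl : x = e.var := (by simpa [litVtx] using h : x = e.var ∧ _).1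
      exact hx e.var_mem

/-- The literal vertex of the clause edge is `litVtx e.var (!σ e.var)`. -/
lemma redDem_inl_eq_zero_or_redDem_inr_eq_zero (σ : X → Bool) {e : ClauseEdge pos neg}
    (he : σ e.var = e.sign) (x : X) (w : RedVtx X C) :
    redDem pos neg D (Sum.inl (x, σ x)) w = 0 ∨ redDem pos neg D (Sum.inr e) w = 0 := by
  by_cases hw : w = Sum.inr (x, 2) ∨ w = litVtx x (σ x)
  · right
    rcases hw with rfl | rfl
    · simp
    · cases h : e.sign <;> simp_all
  · left
    simp [hw]

/-- Otherwise both edges meet at the literal vertex, with total demand `D + 1`. -/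
lemma sign_eq_of_mem {F : Finset (RedEdge X C pos neg)} (hF : redFeasible pos neg D F)
    {e : ClauseEdge pos neg} {b : Bool} (hb : Sum.inl (e.var, b) ∈ F) (he : Sum.inr e ∈ F) :
    b = e.sign := by
  by_contra hne
  let w : RedVtx X C := litVtx e.var b
  have hpair : redDem pos neg D (Sum.inl (e.var, b)) w + redDem pos neg D (Sum.inr e) w ≤ D := by
    rw [← sum_pair (f := fun e => redDem pos neg D e w) Sum.inl_ne_inr]
    exact (sum_le_sum_of_subset (insert_subset_iff.2 ⟨hb, singleton_subset_iff.2 he⟩)).trans (hF w)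
  cases b <;> cases h : e.sign <;> simp_all [w]

lemma exists_inl_mem_of_redLoad_eq (hD1 : 1 ≤ D) {F : Finset (RedEdge X C pos neg)} {x : X}
    (h : redLoad pos neg D F (Sum.inr (x, 2)) = D) : ∃ b, Sum.inl (x, b) ∈ F := by
  obtain ⟨e, he, hne⟩ := exists_ne_zero_of_sum_ne_zero (h.trans_ne (by lia : D ≠ 0))
  rcases e with ⟨y, b⟩ | e
  · obtain rfl : y = x := (by simpa using hne : x = y ∧ _).1.symm
    exact ⟨b, he⟩
  · simp at hne

lemma exists_inr_mem_of_redLoad_eq {F : Finset (RedEdge X C pos neg)} {c : C}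
    (h : redLoad pos neg D F (Sum.inl c) = 1) :
    ∃ e : ClauseEdge pos neg, e.clause = c ∧ Sum.inr e ∈ F := by
  obtain ⟨e, he, hne⟩ := exists_ne_zero_of_sum_ne_zero (h.trans_ne one_ne_zero)
  rcases e with ⟨y, b⟩ | e
  · simp at hne
  · exact ⟨e, (by simpa using hne : c = clause e).symm, he⟩

variable [Fintype X] [Fintype C]

lemma redProfit_eq_sum_hubs (e : RedEdge X C pos neg) :
    redProfit pos neg D e =
      ∑ c, redDem pos neg D e (Sum.inl c) + ∑ x, redDem pos neg D e (Sum.inr (x, 2)) := by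
  rcases e with ⟨x, b⟩ | e <;> simp [redProfit]

lemma sum_redProfit_eq_sum_redLoad (F : Finset (RedEdge X C pos neg)) :
    ∑ e ∈ F, redProfit pos neg D e =
      ∑ c, redLoad pos neg D F (Sum.inl c) + ∑ x, redLoad pos neg D F (Sum.inr (x, 2)) := by
  simp only [redLoad, redProfit_eq_sum_hubs, sum_add_distrib]
  rw [sum_comm, sum_comm (s := F)]

lemma sum_redProfit_le {F : Finset (RedEdge X C pos neg)} (hF : redFeasible pos neg D F) :
    ∑ e ∈ F, redProfit pos neg D e ≤ D * Fintype.card X + Fintype.card C := by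
  rw [sum_redProfit_eq_sum_redLoad]
  calc _ ≤ ∑ _c : C, 1 + ∑ _x : X, D :=
        add_le_add (sum_le_sum fun c _ => hF _) (sum_le_sum fun x _ => hF _)
    _ = D * Fintype.card X + Fintype.card C := by simp [add_comm, mul_comm]

lemma redLoad_hubs_of_sum_redProfit_eq {F : Finset (RedEdge X C pos neg)}
    (hF : redFeasible pos neg D F)
    (hopt : ∑ e ∈ F, redProfit pos neg D e = D * Fintype.card X + Fintype.card C) :
    (∀ c, redLoad pos neg D F (Sum.inl c) = 1) ∧
      (∀ x, redLoad pos neg D F (Sum.inr (x, 2)) = D) := by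
  have hC : ∀ c, redLoad pos neg D F (Sum.inl c) ≤ 1 := fun c => hF _
  have hX : ∀ x, redLoad pos neg D F (Sum.inr (x, 2)) ≤ D := fun x => hF _
  have hsumC := sum_le_sum fun c (_ : c ∈ univ) => hC c
  have hsumX := sum_le_sum fun x (_ : x ∈ univ) => hX x
  rw [sum_redProfit_eq_sum_redLoad] at hopt
  simp only [sum_const, card_univ, smul_eq_mul, mul_one] at hsumC hsumX
  refine ⟨fun c => (sum_eq_sum_iff_of_le fun c _ => hC c).1 ?_ c (mem_univ c),
    fun x => (sum_eq_sum_iff_of_le fun x _ => hX x).1 ?_ x (mem_univ x)⟩ <;>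
  · simp only [sum_const, card_univ, smul_eq_mul, mul_one]
    lia

lemma exists_sat_of_sum_redProfit_eq (hD1 : 1 ≤ D) {F : Finset (RedEdge X C pos neg)}
    (hF : redFeasible pos neg D F)
    (hopt : ∑ e ∈ F, redProfit pos neg D e = D * Fintype.card X + Fintype.card C) :
    ∃ σ : X → Bool, ∀ c, ∃ e : ClauseEdge pos neg, e.clause = c ∧ σ e.var = e.sign := by
  obtain ⟨hC, hX⟩ := redLoad_hubs_of_sum_redProfit_eq hF hopt
  choose σ hσ using fun x => exists_inl_mem_of_redLoad_eq hD1 (hX x)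
  refine ⟨σ, fun c => ?_⟩
  obtain ⟨e, rfl, he⟩ := exists_inr_mem_of_redLoad_eq (hC c)
  exact ⟨e, rfl, sign_eq_of_mem hF (hσ e.var) he⟩

variable {σ : X → Bool} {w : C → ClauseEdge pos neg}

lemma redLoad_image_assignmentEdges (hw : ∀ c, (w c).clause = c) (v : RedVtx X C) :
    redLoad pos neg D (univ.image (assignmentEdges σ w)) v =
      ∑ x, redDem pos neg D (Sum.inl (x, σ x)) v + ∑ c, redDem pos neg D (Sum.inr (w c)) v := by
  rw [redLoad, sum_image fun a _ b _ h => assignmentEdges_injective hw h, Fintype.sum_sum_type]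
  rfl

lemma redFeasible_image_assignmentEdges
    (hD : ∀ x : X, (Finset.univ.filter fun c : C => x ∈ pos c ∨ x ∈ neg c).card ≤ D)
    (hw : ∀ c, (w c).clause = c) (hσ : ∀ c, σ (w c).var = (w c).sign) :
    redFeasible pos neg D (univ.image (assignmentEdges σ w)) := by
  intro v
  rw [← redLoad, redLoad_image_assignmentEdges hw]
  rcases v with c₀ | ⟨x₀, i⟩
  · simp [redCap, hw, eq_comm]
  · set L := ∑ x, redDem pos neg D (Sum.inl (x, σ x)) (Sum.inr (x₀, i)) with hLdef
    set R := ∑ c, redDem pos neg D (Sum.inr (w c)) (Sum.inr (x₀, i))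
    have hL : L ≤ D := by
      rw [hLdef, sum_eq_single x₀ (fun x _ hx => redDem_inl_inr_of_ne hx _ _) (by simp)]
      simp only [redDem_inl]
      split_ifs <;> lia
    have hR : R ≤ D := calc
      R ≤ ∑ c, if x₀ ∈ pos c ∨ x₀ ∈ neg c then 1 else 0 :=
        sum_le_sum fun c _ => (redDem_inr_inr_le (w c) x₀ i).trans_eq (by rw [hw])
      _ = (univ.filter fun c : C => x₀ ∈ pos c ∨ x₀ ∈ neg c).card := (card_filter _ _).symm
      _ ≤ D := hD x₀
    have hLR : L ≠ 0 → R = 0 := fun hL0 => by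
      obtain ⟨x, -, hx⟩ := exists_ne_zero_of_sum_ne_zero hL0
      exact sum_eq_zero fun c _ =>
        (redDem_inl_eq_zero_or_redDem_inr_eq_zero σ (hσ c) x _).resolve_left hx
    show L + R ≤ D
    rcases eq_or_ne L 0 with hL0 | hL0
    · lia
    · rw [hLR hL0]
      lia

lemma sum_redProfit_image_assignmentEdges (hw : ∀ c, (w c).clause = c) :
    ∑ e ∈ univ.image (assignmentEdges σ w), redProfit pos neg D e =
      D * Fintype.card X + Fintype.card C := by
  rw [sum_image fun a _ b _ h => assignmentEdges_injective hw h, Fintype.sum_sum_type]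
  change ∑ _x : X, D + ∑ _c : C, 1 = _
  simp [mul_comm]

end Reduction

/-- The formula `Φ` (clause `c` contains the variables of `pos c` positively
and those of `neg c` negatively) is satisfiable iff the maximum profit of a
feasible demand matching in the reduction instance equals `D·|X| + |C|`,
where `D` bounds the number of clauses containing any single variable. -/
theorem stmt17 {X C : Type*} [Fintype X] [Fintype C] [DecidableEq X] [DecidableEq C]
    (pos neg : C → Finset X) (D : ℕ) (hD1 : 1 ≤ D)
    (hD : ∀ x : X, (Finset.univ.filter fun c : C => x ∈ pos c ∨ x ∈ neg c).card ≤ D) :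
    (∃ σ : X → Bool, ∀ c : C,
        (∃ x ∈ pos c, σ x = true) ∨ (∃ x ∈ neg c, σ x = false))
    ↔ IsGreatest
        {n : ℕ | ∃ F : Finset (RedEdge X C pos neg),
          redFeasible pos neg D F ∧ ∑ e ∈ F, redProfit pos neg D e = n}
        (D * Fintype.card X + Fintype.card C) := by
  simp only [← ClauseEdge.exists_clause_eq_iff]
  constructor
  · rintro ⟨σ, hσ⟩
    choose w hw hσw using hσ
    refine ⟨⟨_, redFeasible_image_assignmentEdges hD hw hσw,
      sum_redProfit_image_assignmentEdges hw⟩, ?_⟩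
    rintro n ⟨F, hF, rfl⟩
    exact sum_redProfit_le hF
  · rintro ⟨⟨F, hF, hopt⟩, -⟩
    exact exists_sat_of_sum_redProfit_eq hD1 hF hopt
end
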